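/- arXiv:2108.04171 — 10 statements merged into one kernel-verified Lean document; each statement's English description precedes it below -/
import Mathlib

section
/- Let p and q be primes with p ≡ 1 (mod 8), q ≡ 3 (mod 4), and Legendre symbol (q/p) = −1. Then there are no integers x, y₁, y₂ satisfying x + 1 = p·y₁² and x − 1 = 2q·y₂². -/
theorem stmt_2 (p q : ℕ) [Fact p.Prime] (hq : q.Prime)
    (hp8 : p % 8 = 1) (hq4 : q % 4 = 3)
    (hleg : legendreSym p (q : ℤ) = -1) :
    ¬ ∃ x y₁ y₂ : ℤ, x + 1 = (p : ℤ) * y₁ ^ 2 ∧ x - 1 = 2 * (q : ℤ) * y₂ ^ 2 := by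
  rintro ⟨x, y₁, y₂, h1, h2⟩
  have hp : p.Prime := Fact.out
  have hp2 : p ≠ 2 := by omega
  have hpe : (p : ℤ) * y₁ ^ 2 - 2 * q * y₂ ^ 2 = 2 := by linarith
  have h2z : (2 : ZMod p) ≠ 0 := by
    have : ((2 : ℕ) : ZMod p) ≠ 0 := by
      rw [Ne, ZMod.natCast_eq_zero_iff]
      intro h
      have := Nat.le_of_dvd (by norm_num) h
      have := hp.two_le
      omega
    simpa using this
  have hc := congrArg (fun z : ℤ => (z : ZMod p)) hpe
  push_cast at hc
  simp [ZMod.natCast_self] at hc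
  have key : (q : ZMod p) * (y₂ : ZMod p) ^ 2 = -1 := by
    have h2 : (2 : ZMod p) * ((q : ZMod p) * (y₂ : ZMod p) ^ 2) = 2 * (-1) := by
      linear_combination -hc
    exact mul_left_cancel₀ h2z h2
  have hy₂ : ((y₂ : ℤ) : ZMod p) ≠ 0 := by
    intro h
    rw [h] at key
    simp at key
  have hcast : (((q : ℤ) * y₂ ^ 2 : ℤ) : ZMod p) = ((-1 : ℤ) : ZMod p) := by
    push_cast
    exact key
  have hL : legendreSym p ((q : ℤ) * y₂ ^ 2) = legendreSym p (-1) := by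
    unfold legendreSym
    rw [hcast]
  rw [legendreSym.mul, legendreSym.sq_one' (p := p) hy₂, hleg,
    legendreSym.at_neg_one hp2, ZMod.χ₄_nat_one_mod_four (by omega)] at hL
  norm_num at hL
end

section
/- Let p and q be primes with p ≡ 1 (mod 8), q ≡ 3 (mod 4), and Legendre symbol (q/p) = −1. Then there are no integers x, y₁, y₂ satisfying x − 1 = p·y₁² and x + 1 = 2q·y₂². -/
theorem stmt_3 (p q : ℕ) [Fact p.Prime] (hq : q.Prime)
    (hp8 : p % 8 = 1) (hq4 : q % 4 = 3)
    (hleg : legendreSym p (q : ℤ) = -1) :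
    ¬ ∃ x y₁ y₂ : ℤ, x - 1 = (p : ℤ) * y₁ ^ 2 ∧ x + 1 = 2 * (q : ℤ) * y₂ ^ 2 := by
  rintro ⟨x, y₁, y₂, h1, h2⟩
  have hp : p.Prime := Fact.out
  have hp2 : p ≠ 2 := by
    rintro rfl; omega
  have hx1 : ((x : ZMod p)) = 1 := by
    have := congrArg (fun z : ℤ => (z : ZMod p)) h1
    push_cast at this
    simp only [ZMod.natCast_self, zero_mul] at this
    linear_combination this
  have h2' : (2 : ZMod p) * (q : ZMod p) * (y₂ : ZMod p) ^ 2 = 2 := by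
    have := congrArg (fun z : ℤ => (z : ZMod p)) h2
    push_cast at this
    rw [hx1] at this
    linear_combination -this
  haveI : Fact (p.Prime) := ⟨hp⟩
  have h2ne : (2 : ZMod p) ≠ 0 := by
    have : ((2 : ℕ) : ZMod p) ≠ 0 := by
      rw [Ne, ZMod.natCast_eq_zero_iff]
      intro h
      have := Nat.le_of_dvd two_pos h
      have := hp.one_lt
      omega
    simpa using this
  have hq1 : (q : ZMod p) * (y₂ : ZMod p) ^ 2 = 1 := by
    field_simp at h2' ⊢
    have := mul_left_cancel₀ h2ne (by linear_combination 2 * h2' : (2:ZMod p) * ((q : ZMod p) * (y₂ : ZMod p) ^ 2) = 2 * 1)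
    exact this
  have hy2 : (y₂ : ZMod p) ≠ 0 := by
    intro h; rw [h] at hq1; simp at hq1
  have hsq : IsSquare ((q : ℤ) : ZMod p) := by
    push_cast
    refine ⟨((y₂ : ZMod p))⁻¹, ?_⟩
    field_simp
    linear_combination hq1
  rw [legendreSym.eq_neg_one_iff] at hleg
  exact hleg hsq
end

section
/- Let d > 1 be an integer that is not a perfect square, and suppose the equation X² − d·Y² = −1 has no integer solutions. If x, y are positive integers with x² − d·y² = 1 and d is squarefree, then 2(x − 1) is not a perfect square. -/
/-- Descent lemma: if `d` is squarefree, `a ≠ 0`, `a` coprime to `t`, and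
`d * y^2 = a^2 * t`, then `t = d * b^2` for some `b`. -/
lemma key_sq (d : ℤ) (hsf : Squarefree d) :
    ∀ n : ℕ, ∀ a y t : ℤ, a.natAbs ≤ n → a ≠ 0 → IsCoprime a t →
      d * y ^ 2 = a ^ 2 * t → ∃ b : ℤ, t = d * b ^ 2 := by
  intro n
  induction n with
  | zero =>
    intro a y t hle ha _ _
    exact absurd (Int.natAbs_eq_zero.mp (Nat.le_zero.mp hle)) ha
  | succ n ih =>
    intro a y t hle ha hcop heq
    by_cases hu : IsUnit a
    · have ha2 : a ^ 2 = 1 := by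
        rcases Int.isUnit_iff.mp hu with h | h <;> simp [h]
      exact ⟨y, by rw [ha2] at heq; linarith⟩
    · obtain ⟨p, hp, hpa⟩ := Int.exists_prime_and_dvd
        (fun h => hu (Int.isUnit_iff_natAbs_eq.mpr h))
      have hp0 : p ≠ 0 := hp.ne_zero
      have hpdy : p * p ∣ d * y ^ 2 := by
        obtain ⟨a₁, rfl⟩ := hpa
        rw [heq]
        exact Dvd.dvd.mul_right ⟨a₁ * a₁, by ring⟩ t
      have hpy : p ∣ y := by
        by_contra hpy
        have hpy2 : ¬ p ∣ y ^ 2 := fun h => hpy (hp.dvd_of_dvd_pow h)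
        have hpd : p ∣ d := by
          rcases hp.dvd_mul.mp (dvd_trans (dvd_mul_left p p) hpdy) with h | h
          · exact h
          · exact absurd h hpy2
        obtain ⟨d', rfl⟩ := hpd
        have h1 : p ∣ d' * y ^ 2 := by
          have := (mul_dvd_mul_iff_left hp0).mp
            (show p * p ∣ p * (d' * y ^ 2) by
              rw [show p * (d' * y ^ 2) = p * d' * y ^ 2 by ring]; exact hpdy)
          exact this
        rcases hp.dvd_mul.mp h1 with h | h
        · obtain ⟨e, rfl⟩ := h
          exact hp.not_unit (hsf p ⟨e, by ring⟩)
        · exact hpy2 h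
      obtain ⟨a₁, rfl⟩ := hpa
      obtain ⟨y₁, rfl⟩ := hpy
      have ha₁ : a₁ ≠ 0 := by rintro rfl; simp at ha
      have heq' : d * y₁ ^ 2 = a₁ ^ 2 * t := by
        have h2 : p ^ 2 * (d * y₁ ^ 2) = p ^ 2 * (a₁ ^ 2 * t) := by ring_nf; ring_nf at heq; linarith
        exact mul_left_cancel₀ (pow_ne_zero 2 hp0) h2
      have hcop' : IsCoprime a₁ t := hcop.of_mul_left_right
      have hbound : a₁.natAbs ≤ n := by
        have h2 : 2 ≤ p.natAbs := (Int.prime_iff_natAbs_prime.mp hp).two_le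
        have h3 : (p * a₁).natAbs = p.natAbs * a₁.natAbs := Int.natAbs_mul p a₁
        have h4 : 1 ≤ a₁.natAbs := Nat.one_le_iff_ne_zero.mpr (fun h => ha₁ (Int.natAbs_eq_zero.mp h))
        have h5 : 2 * a₁.natAbs ≤ p.natAbs * a₁.natAbs := Nat.mul_le_mul_right _ h2
        omega
      exact ih a₁ y₁ t hbound ha₁ hcop' heq'

theorem stmt_7 (d : ℤ) (hd : 1 < d) (hns : ¬ IsSquare d)
    (hneg : ¬ ∃ X Y : ℤ, X ^ 2 - d * Y ^ 2 = -1)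
    (x y : ℤ) (hx : 0 < x) (hy : 0 < y) (hpell : x ^ 2 - d * y ^ 2 = 1)
    (hsf : Squarefree d) :
    ¬ IsSquare (2 * (x - 1)) := by
  rintro ⟨u, hu⟩
  -- u is even
  have hue : Even u := by
    have : Even (u * u) := ⟨x - 1, by linarith⟩
    rcases Int.even_mul.mp this with h | h <;> exact h
  obtain ⟨w, rfl⟩ := hue
  -- x = 2w² + 1
  have hxw : x = 2 * w ^ 2 + 1 := by nlinarith
  have hw0 : w ≠ 0 := by
    rintro rfl
    simp at hxw
    subst hxw
    nlinarith [sq_nonneg y, mul_pos (lt_trans one_pos hd) (mul_pos hy hy)]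
  have hmain : d * y ^ 2 = 4 * w ^ 2 * (w ^ 2 + 1) := by nlinarith
  have hcop1 : IsCoprime w (w ^ 2 + 1) := ⟨-w, 1, by ring⟩
  rcases Int.even_or_odd w with ⟨v, hv⟩ | ⟨s, hs⟩
  · -- w even: 2w coprime to w²+1, get w²+1 = d b²
    have hcop2 : IsCoprime 2 (w ^ 2 + 1) := ⟨-2 * v ^ 2, 1, by rw [hv]; ring⟩
    have hcop : IsCoprime (2 * w) (w ^ 2 + 1) := hcop2.mul_left hcop1
    have heq : d * y ^ 2 = (2 * w) ^ 2 * (w ^ 2 + 1) := by linarith [hmain]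
    have h2w : (2 * w) ≠ 0 := by simp [hw0]
    obtain ⟨b, hb⟩ := key_sq d hsf (2 * w).natAbs (2 * w) y (w ^ 2 + 1) le_rfl h2w hcop heq
    exact hneg ⟨w, b, by rw [← hb]; ring⟩
  · -- w odd: w coprime to 4(w²+1), get 4(w²+1) = d c², then c = 2f
    have hcop2 : IsCoprime w (2 : ℤ) := ⟨1, -s, by rw [hs]; ring⟩
    have hcop4 : IsCoprime w (4 : ℤ) := by
      have := hcop2.mul_right hcop2
      simpa [show (2 : ℤ) * 2 = 4 by norm_num] using this
    have hcop : IsCoprime w (4 * (w ^ 2 + 1)) := hcop4.mul_right hcop1.symm.symm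
    have heq : d * y ^ 2 = w ^ 2 * (4 * (w ^ 2 + 1)) := by linarith [hmain]
    obtain ⟨c, hc⟩ := key_sq d hsf w.natAbs w y (4 * (w ^ 2 + 1)) le_rfl hw0 hcop heq
    -- c must be even
    have hce : Even c := by
      by_contra hco
      have hcodd : Odd c := Int.not_even_iff_odd.mp hco
      obtain ⟨k, hk⟩ := hcodd
      have h4 : (4 : ℤ) ∣ d * c ^ 2 := ⟨w ^ 2 + 1, by linarith⟩
      have hcop4c : IsCoprime (4 : ℤ) (c ^ 2) := by
        have h1 : IsCoprime (2 : ℤ) c := ⟨-k, 1, by rw [hk]; ring⟩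
        have := (h1.mul_left h1).mul_right (h1.mul_left h1)
        simpa [show (2:ℤ)*2 = 4 by norm_num, sq] using this
      have h4d : (4 : ℤ) ∣ d := (IsCoprime.dvd_of_dvd_mul_right hcop4c) h4
      exact (fun h => by rcases Int.isUnit_iff.mp h with h | h <;> norm_num at h :
        ¬ IsUnit (2 : ℤ)) (hsf 2 (by
        obtain ⟨m, hm⟩ := h4d
        exact ⟨m, by linarith⟩))
    obtain ⟨f, hf⟩ := hce
    have hcf : d * c ^ 2 = 4 * (d * f ^ 2) := by rw [hf]; ring
    have : w ^ 2 + 1 = d * f ^ 2 := by linarith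
    exact hneg ⟨w, f, by linarith⟩
end

section
/- Let d > 1 be a squarefree integer and let (x, y) be the minimal positive integer solution of X² − d·Y² = 1 (that is, y is the smallest positive integer for which a solution with positive x exists). Then 2(x + 1) is not a perfect square. -/
theorem stmt_8 (d : ℤ) (hd : 1 < d) (hsf : Squarefree d)
    (x y : ℤ) (hx : 0 < x) (hy : 0 < y) (hpell : x ^ 2 - d * y ^ 2 = 1)
    (hmin : ∀ x' y' : ℤ, 0 < x' → 0 < y' → x' ^ 2 - d * y' ^ 2 = 1 → y ≤ y') :
    ¬ IsSquare (2 * (x + 1)) := by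
  rintro ⟨r, hr⟩
  have hy1 : 1 ≤ y := hy
  have hx2 : 2 ≤ x := by nlinarith
  -- r is even
  have h2r : (2 : ℤ) ∣ r := by
    have h : (2 : ℤ) ∣ r * r := ⟨x + 1, hr.symm⟩
    rcases (Int.prime_two.dvd_mul.mp h) with h' | h' <;> exact h'
  obtain ⟨w, rfl⟩ := h2r
  have hxw : x = 2 * w ^ 2 - 1 := by nlinarith
  have hw2 : 2 ≤ w ^ 2 := by nlinarith
  have hw0 : w ≠ 0 := by rintro rfl; simp at hw2
  have hkey : d * y ^ 2 = (2 * w) ^ 2 * (w ^ 2 - 1) := by nlinarith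
  have hdvd : (2 * w) ∣ d * y := by
    rw [← Int.pow_dvd_pow_iff (two_ne_zero)]
    exact ⟨d * (w ^ 2 - 1), by linear_combination d * hkey⟩
  obtain ⟨c, hc⟩ := hdvd
  have hc2 : c ^ 2 = d * (w ^ 2 - 1) := by
    have h2w : ((2 * w) ^ 2 : ℤ) ≠ 0 := pow_ne_zero _ (by simpa using hw0)
    apply mul_left_cancel₀ h2w
    linear_combination d * hkey - (d * y + 2 * w * c) * hc
  have hdc : d ∣ c := by
    have : d ∣ c ^ 2 := ⟨w ^ 2 - 1, hc2⟩
    exact (hsf.dvd_pow_iff_dvd two_ne_zero).mp this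
  obtain ⟨b, rfl⟩ := hdc
  have hd0 : d ≠ 0 := by omega
  have hb2 : w ^ 2 - d * b ^ 2 = 1 := by
    have : d * (d * b ^ 2) = d * (w ^ 2 - 1) := by linear_combination hc2
    have := mul_left_cancel₀ hd0 this
    linarith
  have hyb : y = 2 * w * b := by
    have : d * y = d * (2 * w * b) := by linarith [hc]
    exact mul_left_cancel₀ hd0 this
  have hbne : b ≠ 0 := by rintro rfl; simp at hb2; omega
  have hW : 0 < |w| := abs_pos.mpr hw0
  have hB : 0 < |b| := abs_pos.mpr hbne
  have hpell' : |w| ^ 2 - d * |b| ^ 2 = 1 := by rw [sq_abs, sq_abs]; exact hb2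
  have hle := hmin |w| |b| hW hB hpell'
  have habs : y = 2 * |w| * |b| := by
    have h1 : |y| = |2 * w * b| := by rw [hyb]
    rw [abs_of_pos hy] at h1
    rw [h1, abs_mul, abs_mul]
    norm_num
  have hW2 : 2 ≤ |w| := by nlinarith [sq_abs w]
  nlinarith
end

section
/- Let q be a prime with q ≡ 3 (mod 8). Then there exist integers s and t with q·t² − s² = 2. -/
private lemma sq_of_coprime_nonneg {a b c : ℤ} (ha : 0 ≤ a) (h : IsCoprime a b)
    (heq : a * b = c ^ 2) : ∃ u : ℤ, a = u ^ 2 := by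
  obtain ⟨a0, h1 | h1⟩ := Int.sq_of_isCoprime h heq
  · exact ⟨a0, h1⟩
  · exact ⟨0, by nlinarith [sq_nonneg a0]⟩

private lemma one_le_sq' {a : ℤ} (h : a ≠ 0) : 1 ≤ a ^ 2 := by
  have h1 : 1 ≤ |a| := Int.one_le_abs h
  nlinarith [sq_abs a]

private lemma two_le_of_four_le_sq' {a : ℕ} (h : 4 ≤ a ^ 2) : 2 ≤ a := by
  by_contra h'
  push_neg at h'
  have h1 : a ^ 2 ≤ 1 ^ 2 := Nat.pow_le_pow_left (by omega) 2
  norm_num at h1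
  nlinarith [Nat.pow_le_pow_left h1 2]

set_option maxHeartbeats 1000000 in
theorem stmt_10 (q : ℕ) (hq : q.Prime) (hmod : q % 8 = 3) :
    ∃ s t : ℤ, (q : ℤ) * t ^ 2 - s ^ 2 = 2 := by
  have hq3 : (3 : ℕ) ≤ q := by omega
  have hq3' : (3 : ℤ) ≤ (q : ℤ) := by exact_mod_cast hq3
  have hqz : Prime (q : ℤ) := Nat.prime_iff_prime_int.mp hq
  have hqne : (q : ℤ) ≠ 0 := by positivity
  have hnsq : ¬ IsSquare ((q : ℤ)) := hqz.not_isSquare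
  obtain ⟨x, y, hxy, hy0⟩ := Pell.exists_of_not_isSquare (by positivity) hnsq
  have key : ∀ n : ℕ, (2 ≤ n ∧ ∃ y : ℤ, y ≠ 0 ∧ (n : ℤ) ^ 2 - q * y ^ 2 = 1) →
      ∃ s t : ℤ, (q : ℤ) * t ^ 2 - s ^ 2 = 2 := by
    intro n0 hex0
    classical
    have hex : ∃ n : ℕ, 2 ≤ n ∧ ∃ y : ℤ, y ≠ 0 ∧ (n : ℤ) ^ 2 - q * y ^ 2 = 1 := ⟨n0, hex0⟩
    clear hex0
    obtain ⟨hn2, Y, hY0, hXY⟩ := Nat.find_spec hex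
    set n := Nat.find hex with hn
    set X : ℤ := (n : ℤ) with hX
    have hX2 : (2 : ℤ) ≤ X := by rw [hX]; exact_mod_cast hn2
    have hfact : (X - 1) * (X + 1) = (q : ℤ) * Y ^ 2 := by linear_combination hXY
    have hY1 : 1 ≤ Y ^ 2 := one_le_sq' hY0
    rcases Int.even_or_odd X with ⟨k, hk⟩ | ⟨k, hk⟩
    · -- X even
      have hcop : IsCoprime (X - 1) (X + 1) := ⟨-(k + 1), k, by rw [hk]; ring⟩
      have hdvd : (q : ℤ) ∣ (X - 1) * (X + 1) := ⟨Y ^ 2, hfact⟩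
      rcases hqz.2.2 _ _ hdvd with hd | hd
      · -- q ∣ X - 1 : contradiction mod 8
        exfalso
        obtain ⟨m, hm⟩ := hd
        have hm' : m * (X + 1) = Y ^ 2 := by
          have h := hfact; rw [hm] at h
          exact mul_left_cancel₀ hqne (by linear_combination h)
        have hmpos : 0 ≤ m := by nlinarith
        have hcopm : IsCoprime m (X + 1) :=
          hcop.of_isCoprime_of_dvd_left ⟨(q : ℤ), by rw [hm]; ring⟩
        obtain ⟨v, hv⟩ := sq_of_coprime_nonneg hmpos hcopm hm'
        obtain ⟨u, hu⟩ := sq_of_coprime_nonneg (c := Y) (by linarith : (0:ℤ) ≤ X + 1)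
          hcopm.symm (by linear_combination hm')
        have h2 : u ^ 2 - (q : ℤ) * v ^ 2 = 2 := by
          linear_combination hm - hu + (q : ℤ) * hv
        have h8 : ((q : ℕ) : ZMod 8) = 3 := by
          rw [← ZMod.natCast_mod q 8, hmod]; decide
        have hcast := congrArg (fun z : ℤ => (z : ZMod 8)) h2
        push_cast at hcast
        rw [h8] at hcast
        exact (by decide : ∀ A B : ZMod 8, ¬ (A ^ 2 - 3 * B ^ 2 = 2)) _ _ hcast
      · -- q ∣ X + 1 : success
        obtain ⟨m, hm⟩ := hd
        have hm' : (X - 1) * m = Y ^ 2 := by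
          have h := hfact; rw [hm] at h
          exact mul_left_cancel₀ hqne (by linear_combination h)
        have hmpos : 0 ≤ m := by nlinarith
        have hcopm : IsCoprime (X - 1) m :=
          hcop.of_isCoprime_of_dvd_right ⟨(q : ℤ), by rw [hm]; ring⟩
        obtain ⟨u, hu⟩ := sq_of_coprime_nonneg (by linarith : (0:ℤ) ≤ X - 1) hcopm hm'
        obtain ⟨v, hv⟩ := sq_of_coprime_nonneg (c := Y) hmpos hcopm.symm
          (by linear_combination hm')
        exact ⟨u, v, by linear_combination -hm - (q : ℤ) * hv + hu⟩
    · -- X odd, X = 2k + 1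
      have hk1 : 1 ≤ k := by omega
      have h4 : (q : ℤ) * Y ^ 2 = 4 * (k * (k + 1)) := by
        rw [hk] at hfact; linear_combination -hfact
      have hYe : Even Y := by
        have h1 : Even ((q : ℤ) * Y ^ 2) := ⟨2 * (k * (k + 1)), by linear_combination h4⟩
        have hqodd : ¬ Even ((q : ℕ) : ℤ) := by
          rw [Int.even_coe_nat, Nat.even_iff]; omega
        rcases Int.even_mul.mp h1 with h | h
        · exact absurd h hqodd
        · exact (Int.even_pow.mp h).1
      obtain ⟨c, hc⟩ := hYe
      have habc : k * (k + 1) = (q : ℤ) * c ^ 2 := by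
        have h44 : (4 : ℤ) * (k * (k + 1)) = 4 * ((q : ℤ) * c ^ 2) := by
          rw [hc] at h4; linear_combination -h4
        exact mul_left_cancel₀ (by norm_num) h44
      have hcop : IsCoprime k (k + 1) := ⟨-1, 1, by ring⟩
      rcases hqz.2.2 k (k + 1) ⟨c ^ 2, habc⟩ with hd | hd
      · -- q ∣ k : descent
        exfalso
        obtain ⟨m, hm⟩ := hd
        have hm' : m * (k + 1) = c ^ 2 := by
          have h := habc; rw [hm] at h
          exact mul_left_cancel₀ hqne (by linear_combination h + (q : ℤ) * m * hm)
        have hmpos : 0 ≤ m := by nlinarith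
        have hcopm : IsCoprime m (k + 1) :=
          hcop.of_isCoprime_of_dvd_left ⟨(q : ℤ), by rw [hm]; ring⟩
        obtain ⟨v, hv⟩ := sq_of_coprime_nonneg hmpos hcopm hm'
        obtain ⟨u, hu⟩ := sq_of_coprime_nonneg (c := c) (by linarith : (0:ℤ) ≤ k + 1)
          hcopm.symm (by linear_combination hm')
        have hv0 : v ≠ 0 := by
          intro h0
          rw [h0] at hv
          norm_num at hv
          rw [hv, mul_zero] at hm
          omega
        have hv1 : 1 ≤ v ^ 2 := one_le_sq' hv0
        have hu1 : u ^ 2 - (q : ℤ) * v ^ 2 = 1 := by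
          linear_combination hm - hu + (q : ℤ) * hv
        set N := u.natAbs with hN
        have hNsq : ((N : ℤ)) ^ 2 = u ^ 2 := by
          rw [hN]; push_cast [Int.natAbs_sq]; rw [sq_abs]
        have hu4 : 4 ≤ u ^ 2 := by nlinarith
        have hN2 : 2 ≤ N := by
          have h1 : (4:ℤ) ≤ ((N:ℤ))^2 := by rw [hNsq]; exact hu4
          have h2 : 4 ≤ N ^ 2 := by exact_mod_cast h1
          exact two_le_of_four_le_sq' h2
        have hNltn : N < n := by
          have h1 : ((N : ℤ)) ^ 2 < (n : ℤ) := by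
            rw [hNsq, ← hu]
            rw [hX] at hk
            omega
          have h2 : N ^ 2 < n := by exact_mod_cast h1
          calc N ≤ N ^ 2 := Nat.le_self_pow (by norm_num) N
          _ < n := h2
        exact absurd ⟨hN2, v, hv0, by rw [hNsq]; exact hu1⟩ (Nat.find_min hex hNltn)
      · -- q ∣ k + 1 : contradiction mod 4
        exfalso
        obtain ⟨m, hm⟩ := hd
        have hm' : k * m = c ^ 2 := by
          have h := habc; rw [hm] at h
          exact mul_left_cancel₀ hqne (by linear_combination h)
        have hmpos : 0 ≤ m := by nlinarith
        have hcopm : IsCoprime k m :=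
          hcop.of_isCoprime_of_dvd_right ⟨(q : ℤ), by rw [hm]; ring⟩
        obtain ⟨u, hu⟩ := sq_of_coprime_nonneg (by linarith : (0:ℤ) ≤ k) hcopm hm'
        obtain ⟨v, hv⟩ := sq_of_coprime_nonneg (c := c) hmpos hcopm.symm
          (by linear_combination hm')
        have h2 : (q : ℤ) * v ^ 2 - u ^ 2 = 1 := by
          linear_combination -hm + hu - (q : ℤ) * hv
        have h4' : ((q : ℕ) : ZMod 4) = 3 := by
          rw [← ZMod.natCast_mod q 4]
          have hq4 : q % 4 = 3 := by omega
          rw [hq4]; decide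
        have hcast := congrArg (fun z : ℤ => (z : ZMod 4)) h2
        push_cast at hcast
        rw [h4'] at hcast
        exact (by decide : ∀ A B : ZMod 4, ¬ (3 * B ^ 2 - A ^ 2 = 1)) _ _ hcast
  apply key x.natAbs
  have hxx : ((x.natAbs : ℤ)) ^ 2 = x ^ 2 := by push_cast [Int.natAbs_sq]; rw [sq_abs]
  have hy1 : 1 ≤ y ^ 2 := one_le_sq' hy0
  have hx4 : 4 ≤ x ^ 2 := by nlinarith
  constructor
  · have h1 : (4:ℤ) ≤ ((x.natAbs:ℤ))^2 := by rw [hxx]; exact hx4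
    have h2 : 4 ≤ x.natAbs ^ 2 := by exact_mod_cast h1
    exact two_le_of_four_le_sq' h2
  · exact ⟨y, hy0, by rw [hxx]; exact hxy⟩
end

section
/- Let q be a prime with q ≡ 3 (mod 8). Then there exist integers s and t with 2q·t² − s² = 2. -/
private lemma no8a : ∀ a b : ZMod 8, 6 * (b * b) ≠ a * a + 1 := by decide

private lemma no8b : ∀ a b : ZMod 8, 2 * (b * b) ≠ 3 * (a * a) + 1 := by decide

private lemma no8sq : ∀ r : ZMod 8, (6 : ZMod 8) ≠ r * r := by decide

private lemma qcast8 {q : ℕ} (hmod : q % 8 = 3) : (q : ZMod 8) = 3 := by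
  have := (ZMod.natCast_mod q 8)
  rw [hmod] at this
  simpa using this.symm

private lemma key (q : ℕ) (hq : q.Prime) (hmod : q % 8 = 3) :
    ∀ X Y : ℕ, Y ≠ 0 → X * X = 1 + 2 * q * (Y * Y) →
      ∃ a b : ℕ, q * (b * b) = 2 * (a * a) + 1 := by
  intro X
  induction X using Nat.strong_induction_on with
  | _ X ih =>
  intro Y hY hXY
  have hXY' : X * X = 1 + 2 * (q * (Y * Y)) := by rw [hXY]; ring
  have hqodd : q % 2 = 1 := by omega
  -- X is odd
  have hXodd : Odd X := by
    rcases Nat.even_or_odd X with hE | hO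
    · exfalso
      obtain ⟨m, hm⟩ := hE
      have h1 : X * X = 2 * (m * X) := by rw [hm]; ring
      omega
    · exact hO
  obtain ⟨k, hk⟩ := hXodd
  have hA : 2 * (k * (k + 1)) = q * (Y * Y) := by
    have e : X * X = 4 * (k * (k + 1)) + 1 := by subst hk; ring
    omega
  -- Y is even
  have hYeven : Y % 2 = 0 := by
    rcases Nat.even_or_odd Y with hE | hO
    · obtain ⟨r, hr⟩ := hE; omega
    · exfalso
      obtain ⟨j, hj⟩ := hO
      obtain ⟨i, hi⟩ : ∃ i, q = 2 * i + 1 := ⟨q / 2, by omega⟩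
      have hodd : q * (Y * Y) = 2 * (4 * (i * (j * j)) + 4 * (i * j) + i + 2 * (j * j) + 2 * j) + 1 := by
        rw [hi, hj]; ring
      omega
  obtain ⟨z, hz⟩ : ∃ z, Y = 2 * z := ⟨Y / 2, by omega⟩
  have hz0 : z ≠ 0 := by rintro rfl; omega
  have hB : k * (k + 1) = 2 * (q * (z * z)) := by
    have h4 : q * (Y * Y) = 4 * (q * (z * z)) := by rw [hz]; ring
    omega
  have hk0 : k ≠ 0 := by
    rintro rfl
    have hq0 : q * (z * z) = 0 := by omega
    rcases Nat.mul_eq_zero.mp hq0 with h | h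
    · exact absurd h hq.pos.ne'
    · exact hz0 (mul_self_eq_zero.mp h)
  have hcop : Nat.Coprime k (k + 1) := by simp
  have hqdvd : q ∣ k * (k + 1) := ⟨2 * (z * z), by rw [hB]; ring⟩
  have h2dvd : (2 : ℕ) ∣ k ∨ (2 : ℕ) ∣ (k + 1) := by omega
  have hqk : q ∣ k ∨ q ∣ (k + 1) := (Nat.Prime.dvd_mul hq).mp hqdvd
  have hcop2q : Nat.Coprime 2 q :=
    Nat.coprime_two_left.mpr (Nat.odd_iff.mpr hqodd)
  -- helper to extract squares from coprime product
  have sqhelp : ∀ m n : ℕ, Nat.Coprime m n → m * n = z * z →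
      ∃ a b : ℕ, m = a * a ∧ n = b * b := by
    intro m n hmn hprod
    have hprod' : m * n = z ^ 2 := by rw [hprod]; ring
    have hu : IsUnit (gcd m n) := by
      have h1 : gcd m n = 1 := hmn
      rw [h1]; exact isUnit_one
    obtain ⟨a, ha⟩ := exists_eq_pow_of_mul_eq_pow hu hprod'
    have hu' : IsUnit (gcd n m) := by
      have h1 : gcd n m = 1 := hmn.symm
      rw [h1]; exact isUnit_one
    obtain ⟨b, hb⟩ := exists_eq_pow_of_mul_eq_pow hu' (by rw [mul_comm]; exact hprod')
    exact ⟨a, b, by rw [ha]; ring, by rw [hb]; ring⟩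
  rcases h2dvd with h2 | h2 <;> rcases hqk with hqd | hqd
  · -- 2 ∣ k, q ∣ k : descent case, k = 2q·m
    have h2q : 2 * q ∣ k := hcop2q.mul_dvd_of_dvd_of_dvd h2 hqd
    obtain ⟨m, hm⟩ := h2q
    have hmn : m * (k + 1) = z * z := by
      have h2q0 : 0 < 2 * q := by omega
      apply Nat.eq_of_mul_eq_mul_left h2q0
      calc 2 * q * (m * (k + 1)) = (2 * q * m) * (k + 1) := by ring
        _ = k * (k + 1) := by rw [← hm]
        _ = 2 * (q * (z * z)) := hB
        _ = 2 * q * (z * z) := by ring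
    have hcopm : Nat.Coprime m (k + 1) :=
      Nat.Coprime.coprime_dvd_left ⟨2 * q, by rw [hm]; ring⟩ hcop
    obtain ⟨a, b, ham, hbn⟩ := sqhelp m (k + 1) hcopm hmn
    -- new Pell solution: b*b = 1 + 2q(a*a), with b < X
    have ha0 : a ≠ 0 := by
      rintro rfl
      apply hk0
      rw [hm, ham]; ring
    have hpell : b * b = 1 + 2 * q * (a * a) := by
      rw [← hbn, hm, ham]; ring
    have hblt : b < X := by
      have hb1 : 1 ≤ b := by
        rcases Nat.eq_zero_or_pos b with rfl | h
        · omega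
        · omega
      have hbb : b ≤ b * b := Nat.le_mul_of_pos_left b (by omega)
      have : b * b = k + 1 := hbn.symm
      subst hk
      omega
    exact ih b hblt a ha0 hpell
  · -- 2 ∣ k, q ∣ k+1 : the good case
    obtain ⟨m, hm⟩ := h2
    obtain ⟨n, hn⟩ := hqd
    have hmn : m * n = z * z := by
      have h2q0 : 0 < 2 * q := by omega
      apply Nat.eq_of_mul_eq_mul_left h2q0
      calc 2 * q * (m * n) = (2 * m) * (q * n) := by ring
        _ = k * (k + 1) := by rw [← hm, ← hn]
        _ = 2 * (q * (z * z)) := hB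
        _ = 2 * q * (z * z) := by ring
    have hcopm : Nat.Coprime m n :=
      Nat.Coprime.coprime_dvd_right ⟨q, by rw [hn]; ring⟩
        (Nat.Coprime.coprime_dvd_left ⟨2, by rw [hm]; ring⟩ hcop)
    obtain ⟨a, b, ham, hbn⟩ := sqhelp m n hcopm hmn
    refine ⟨a, b, ?_⟩
    have e1 : k = 2 * (a * a) := by rw [hm, ham]
    have e2 : k + 1 = q * (b * b) := by rw [hn, hbn]
    omega
  · -- 2 ∣ k+1, q ∣ k : impossible mod 8 (2b² = q a² + 1)
    exfalso
    obtain ⟨n, hn⟩ := h2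
    obtain ⟨m, hm⟩ := hqd
    have hmn : m * n = z * z := by
      have h2q0 : 0 < 2 * q := by omega
      apply Nat.eq_of_mul_eq_mul_left h2q0
      calc 2 * q * (m * n) = (q * m) * (2 * n) := by ring
        _ = k * (k + 1) := by rw [← hm, ← hn]
        _ = 2 * (q * (z * z)) := hB
        _ = 2 * q * (z * z) := by ring
    have hcopm : Nat.Coprime m n :=
      Nat.Coprime.coprime_dvd_right ⟨2, by rw [hn]; ring⟩
        (Nat.Coprime.coprime_dvd_left ⟨q, by rw [hm]; ring⟩ hcop)
    obtain ⟨a, b, ham, hbn⟩ := sqhelp m n hcopm hmn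
    have heq : 2 * (b * b) = q * (a * a) + 1 := by
      have e1 : k = q * (a * a) := by rw [hm, ham]
      have e2 : k + 1 = 2 * (b * b) := by rw [hn, hbn]
      omega
    have hcast := congrArg (Nat.cast : ℕ → ZMod 8) heq
    push_cast at hcast
    rw [qcast8 hmod] at hcast
    have h2' : (2 : ZMod 8) * ((b : ZMod 8) * b) = 3 * ((a : ZMod 8) * a) + 1 := by
      linear_combination hcast
    exact no8b a b h2'
  · -- 2 ∣ k+1, q ∣ k+1 : impossible mod 8 (2q b² = a² + 1)
    exfalso
    have h2q : 2 * q ∣ (k + 1) := hcop2q.mul_dvd_of_dvd_of_dvd h2 hqd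
    obtain ⟨n, hn⟩ := h2q
    have hmn : k * n = z * z := by
      have h2q0 : 0 < 2 * q := by omega
      apply Nat.eq_of_mul_eq_mul_left h2q0
      calc 2 * q * (k * n) = k * (2 * q * n) := by ring
        _ = k * (k + 1) := by rw [← hn]
        _ = 2 * (q * (z * z)) := hB
        _ = 2 * q * (z * z) := by ring
    have hcopm : Nat.Coprime k n :=
      Nat.Coprime.coprime_dvd_right ⟨2 * q, by rw [hn]; ring⟩ hcop
    obtain ⟨a, b, ham, hbn⟩ := sqhelp k n hcopm hmn
    have heq : 2 * (q * (b * b)) = a * a + 1 := by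
      have e2 : k + 1 = 2 * (q * (b * b)) := by rw [hn, hbn]; ring
      omega
    have hcast := congrArg (Nat.cast : ℕ → ZMod 8) heq
    push_cast at hcast
    rw [qcast8 hmod] at hcast
    have h6 : (6 : ZMod 8) * ((b : ZMod 8) * b) = (a : ZMod 8) * a + 1 := by
      linear_combination hcast
    exact no8a a b h6

theorem stmt_11 (q : ℕ) (hq : q.Prime) (hmod : q % 8 = 3) :
    ∃ s t : ℤ, 2 * (q : ℤ) * t ^ 2 - s ^ 2 = 2 := by
  have hd : (0 : ℤ) < 2 * q := by
    have := hq.two_le; positivity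
  have hns : ¬IsSquare (2 * (q : ℤ)) := by
    rintro ⟨r, hr⟩
    have hcast := congrArg (Int.cast : ℤ → ZMod 8) hr
    push_cast at hcast
    rw [qcast8 hmod] at hcast
    have h6 : (6 : ZMod 8) = (r : ZMod 8) * (r : ZMod 8) := by
      linear_combination hcast
    exact no8sq _ h6
  obtain ⟨x, y, hpell, hy⟩ := Pell.exists_of_not_isSquare hd hns
  set X := x.natAbs with hX
  set Y := y.natAbs with hYdef
  have hY0 : Y ≠ 0 := Int.natAbs_ne_zero.mpr hy
  have hXX : (X : ℤ) * X = x * x := Int.natAbs_mul_self' x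
  have hYY : (Y : ℤ) * Y = y * y := Int.natAbs_mul_self' y
  have hXYZ : (X : ℤ) * X = 1 + 2 * q * ((Y : ℤ) * Y) := by
    rw [hXX, hYY]; linear_combination hpell
  have hXY : X * X = 1 + 2 * q * (Y * Y) := by exact_mod_cast hXYZ
  obtain ⟨a, b, hab⟩ := key q hq hmod X Y hY0 hXY
  refine ⟨2 * a, b, ?_⟩
  have hcast := congrArg (Nat.cast : ℕ → ℤ) hab
  push_cast at hcast
  linear_combination (2 : ℤ) * hcast
end

section
/- Let p and q be primes with p ≡ 1 (mod 8), q ≡ 3 (mod 8), and Legendre symbol (p/q) = −1. Let (x, y) be the minimal positive integer solution of X² − 2pq·Y² = 1. Then x − 1 is a perfect square. -/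
lemma sqh1 {F : Type*} [Field F] {c v : F} (h : c * v ^ 2 = 1) : IsSquare c := by
  have hv : v ≠ 0 := by rintro rfl; simp at h
  refine ⟨v⁻¹, ?_⟩
  field_simp
  linear_combination h

lemma sqh2 {F : Type*} [Field F] {c d v : F} (h : c * d * v ^ 2 = 1) (hd : IsSquare d) :
    IsSquare c := by
  obtain ⟨w, rfl⟩ := hd
  exact sqh1 (v := w * v) (by linear_combination h)

lemma copr_succ (n : ℕ) : Nat.Coprime n (n + 1) := by
  have h := Nat.dvd_sub (Nat.gcd_dvd_right n (n + 1)) (Nat.gcd_dvd_left n (n + 1))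
  simpa [Nat.dvd_one] using h

lemma nat_split {k z d e : ℕ} (hd : d ∣ k) (he : e ∣ (k + 1)) (hde : 0 < d * e)
    (h : k * (k + 1) = d * e * z ^ 2) : ∃ u v, k = d * u ^ 2 ∧ k + 1 = e * v ^ 2 := by
  obtain ⟨a, rfl⟩ := hd
  obtain ⟨b, hb⟩ := he
  have hab : a * b = z ^ 2 := by
    refine Nat.eq_of_mul_eq_mul_left hde ?_
    calc d * e * (a * b) = d * a * (e * b) := by ring
    _ = d * a * (d * a + 1) := by rw [hb]
    _ = d * e * z ^ 2 := h
  have hco : Nat.Coprime a b := by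
    have h1 : Nat.Coprime (d * a) (d * a + 1) := copr_succ _
    exact Nat.Coprime.coprime_dvd_left (Dvd.intro_left d rfl)
      (h1.coprime_dvd_right (Dvd.intro_left e hb.symm))
  obtain ⟨u, hu⟩ := exists_eq_pow_of_mul_eq_pow (Nat.isUnit_iff.mpr hco) hab
  obtain ⟨v, hv⟩ := exists_eq_pow_of_mul_eq_pow (Nat.isUnit_iff.mpr hco.symm)
    (by rw [mul_comm]; exact hab)
  exact ⟨u, v, by rw [← hu], by rw [hb, ← hv]⟩

theorem stmt_13 (p q : ℕ) (hp : p.Prime) [Fact q.Prime]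
    (hp8 : p % 8 = 1) (hq8 : q % 8 = 3)
    (hleg : legendreSym q (p : ℤ) = -1)
    (x y : ℤ) (hx : 0 < x) (hy : 0 < y)
    (hpell : x ^ 2 - 2 * (p : ℤ) * (q : ℤ) * y ^ 2 = 1)
    (hmin : ∀ x' y' : ℤ, 0 < x' → 0 < y' →
      x' ^ 2 - 2 * (p : ℤ) * (q : ℤ) * y' ^ 2 = 1 → y ≤ y') :
    IsSquare (x - 1) := by
  haveI hPP : Fact p.Prime := ⟨hp⟩
  have hq : q.Prime := Fact.out
  have hp2 : p ≠ 2 := by rintro rfl; omega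
  have hq2 : q ≠ 2 := by rintro rfl; omega
  have hpq : p ≠ q := by rintro rfl; omega
  -- square facts
  have hs1 : IsSquare (-1 : ZMod p) := ZMod.exists_sq_eq_neg_one_iff.mpr (by omega)
  have hs2 : IsSquare (2 : ZMod p) := (ZMod.exists_sq_eq_two_iff hp2).mpr (Or.inl hp8)
  have hs3 : ¬ IsSquare (-1 : ZMod q) := fun h => by
    have := ZMod.exists_sq_eq_neg_one_iff.mp h; omega
  have hs4 : ¬ IsSquare (2 : ZMod q) := fun h => by
    have := (ZMod.exists_sq_eq_two_iff hq2).mp h; omega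
  have hnsp : ¬ IsSquare ((p : ZMod q)) := fun h => by
    have h1 : legendreSym q p = 1 :=
      (legendreSym.eq_one_iff' q (ZMod.prime_ne_zero q p (Ne.symm hpq))).mpr h
    rw [show ((p : ℤ) : ℤ) = ((p : ℕ) : ℤ) from rfl] at hleg
    omega
  have hnsq : ¬ IsSquare ((q : ZMod p)) := fun h => by
    have h1 : legendreSym p q = 1 :=
      (legendreSym.eq_one_iff' p (ZMod.prime_ne_zero p q hpq)).mpr h
    have h2 : legendreSym q p = legendreSym p q :=
      legendreSym.quadratic_reciprocity_one_mod_four (by omega) hq2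
    omega
  -- to naturals
  lift x to ℕ using hx.le with m
  lift y to ℕ using hy.le with n
  have hm1 : 1 ≤ m := by exact_mod_cast hx
  have hn1 : 1 ≤ n := by exact_mod_cast hy
  have hEn : m ^ 2 = 2 * p * q * n ^ 2 + 1 := by
    have : (m : ℤ) ^ 2 = 2 * p * q * (n : ℤ) ^ 2 + 1 := by linarith
    exact_mod_cast this
  have hodd : Odd m := by
    rcases Nat.even_or_odd m with he | ho
    · exfalso
      have h2 : Even (m ^ 2) := by rw [sq]; exact he.mul_right m
      rw [hEn, show 2 * p * q * n ^ 2 = 2 * (p * q * n ^ 2) from by ring] at h2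
      rcases h2 with ⟨t, ht⟩
      generalize p * q * n ^ 2 = w at ht
      omega
    · exact ho
  obtain ⟨k, rfl⟩ := hodd
  have h1 : 2 * (p * q * n ^ 2) + 1 = 4 * (k * (k + 1)) + 1 := by
    calc 2 * (p * q * n ^ 2) + 1 = 2 * p * q * n ^ 2 + 1 := by ring
    _ = (2 * k + 1) ^ 2 := hEn.symm
    _ = 4 * (k * (k + 1)) + 1 := by ring
  have hpqn : p * q * n ^ 2 = 2 * (k * (k + 1)) := by omega
  have h2n : 2 ∣ n := by
    have hd2 : (2 : ℕ) ∣ p * q * n ^ 2 := ⟨k * (k + 1), hpqn⟩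
    have hnp : ¬ (2 : ℕ) ∣ p := by omega
    have hnq : ¬ (2 : ℕ) ∣ q := by omega
    have := (Nat.Prime.dvd_mul Nat.prime_two).mp hd2
    rcases this with h | h
    · rcases (Nat.Prime.dvd_mul Nat.prime_two).mp h with h' | h'
      · exact absurd h' hnp
      · exact absurd h' hnq
    · exact Nat.Prime.dvd_of_dvd_pow Nat.prime_two h
  obtain ⟨z, rfl⟩ := h2n
  have hz1 : 1 ≤ z := by omega
  have hK : k * (k + 1) = 2 * p * q * z ^ 2 := by
    refine (Nat.eq_of_mul_eq_mul_left (show 0 < 2 by norm_num) ?_).symm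
    calc 2 * (2 * p * q * z ^ 2) = p * q * (2 * z) ^ 2 := by ring
    _ = 2 * (k * (k + 1)) := hpqn
  have hk1 : 1 ≤ k := by
    rcases Nat.eq_zero_or_pos k with rfl | h
    · exfalso
      simp only [Nat.zero_mul, zero_mul] at hK
      have := hK.symm
      rcases Nat.mul_eq_zero.mp this with h' | h'
      · rcases Nat.mul_eq_zero.mp h' with h'' | h''
        · rcases Nat.mul_eq_zero.mp h'' with h3 | h3 <;> omega
        · omega
      · have : z = 0 := by
          have := Nat.pow_eq_zero.mp h'
          omega
        omega
    · exact h
  clear hEn h1 hpqn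
  -- prime divisibility splits
  have hdvd : ∀ r : ℕ, r.Prime → r ∣ 2 * p * q → r ∣ k ∨ r ∣ (k + 1) := by
    intro r hr hrd
    exact (Nat.Prime.dvd_mul hr).mp (hrd.trans ⟨z ^ 2, hK⟩)
  have c2 := hdvd 2 Nat.prime_two ⟨p * q, by ring⟩
  have cp := hdvd p hp ⟨2 * q, by ring⟩
  have cq := hdvd q hq ⟨2 * p, by ring⟩
  have cop2p : Nat.Coprime 2 p := (Nat.coprime_primes Nat.prime_two hp).mpr (Ne.symm hp2)
  have cop2q : Nat.Coprime 2 q := (Nat.coprime_primes Nat.prime_two hq).mpr (Ne.symm hq2)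
  have coppq : Nat.Coprime p q := (Nat.coprime_primes hp hq).mpr hpq
  have hppos := hp.pos
  have hqpos := hq.pos
  -- the goal in the valid case
  have goal_of : ∀ u : ℕ, k = 2 * u ^ 2 → IsSquare ((2 * k + 1 : ℕ) - (1 : ℤ)) := by
    intro u hu
    refine ⟨(2 * u : ℕ), ?_⟩
    push_cast [hu]
    ring

  rcases c2 with h2k | h2k <;> rcases cp with hpk | hpk <;> rcases cq with hqk | hqk
  -- case 1: 2,p,q ∣ k : minimality contradiction
  · have hd : 2 * (p * q) ∣ k :=
      Nat.Coprime.mul_dvd_of_dvd_of_dvd (Nat.Coprime.mul_right cop2p cop2q) h2k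
        (coppq.mul_dvd_of_dvd_of_dvd hpk hqk)
    obtain ⟨u, v, hu, hv⟩ := nat_split (z := z) (e := 1) hd (one_dvd _)
      (by simpa using Nat.mul_pos (Nat.mul_pos two_pos hppos) hqpos)
      (by rw [hK]; try ring)
    exfalso
    have hu0 : 0 < u := by
      rcases Nat.eq_zero_or_pos u with rfl | h
      · simp at hu; omega
      · exact h
    have hv0 : 0 < v := by
      rcases Nat.eq_zero_or_pos v with rfl | h
      · simp at hv
      · exact h
    have hPell2 : ((v : ℤ)) ^ 2 - 2 * (p : ℤ) * (q : ℤ) * (u : ℤ) ^ 2 = 1 := by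
      have c0 : ((k : ℤ)) = 2 * ((p : ℤ) * (q : ℤ)) * (u : ℤ) ^ 2 := by exact_mod_cast hu
      have c1 : ((k : ℤ)) + 1 = 1 * (v : ℤ) ^ 2 := by exact_mod_cast hv
      linear_combination c0 - c1
    have hle := hmin (v : ℤ) (u : ℤ) (by exact_mod_cast hv0) (by exact_mod_cast hu0) hPell2
    have hleN : 2 * z ≤ u := by exact_mod_cast hle
    have hz2 : z ^ 2 = u ^ 2 * v ^ 2 := by
      refine Nat.eq_of_mul_eq_mul_left (Nat.mul_pos (Nat.mul_pos two_pos hppos) hqpos) ?_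
      calc 2 * p * q * z ^ 2 = k * (k + 1) := hK.symm
      _ = (2 * (p * q) * u ^ 2) * (1 * v ^ 2) := by rw [← hu, ← hv]
      _ = 2 * p * q * (u ^ 2 * v ^ 2) := by ring
    have hle2 : u ^ 2 ≤ z ^ 2 := by
      rw [hz2]
      have h1 : 1 ≤ v ^ 2 := Nat.one_le_iff_ne_zero.mpr (pow_ne_zero 2 hv0.ne')
      calc u ^ 2 = u ^ 2 * 1 := by ring
      _ ≤ u ^ 2 * v ^ 2 := Nat.mul_le_mul_left _ h1
    have hzu : u ≤ z := by
      by_contra hcon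
      push_neg at hcon
      exact absurd hle2 (not_le.mpr (Nat.pow_lt_pow_left hcon two_ne_zero))
    omega
  -- case 2: 2,p ∣ k, q ∣ k+1
  · have hd : 2 * p ∣ k := cop2p.mul_dvd_of_dvd_of_dvd h2k hpk
    obtain ⟨u, v, hu, hv⟩ := nat_split (z := z) hd hqk
      (Nat.mul_pos (Nat.mul_pos two_pos hppos) hqpos) (by rw [hK]; try ring)
    exfalso
    apply hnsq
    have c0 := congrArg (fun t : ℕ => (t : ZMod p)) hu
    have c1 := congrArg (fun t : ℕ => (t : ZMod p)) hv
    push_cast at c0 c1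
    rw [ZMod.natCast_self] at c0
    exact sqh1 (v := (v : ZMod p)) (by linear_combination c0 - c1)
  -- case 3: 2,q ∣ k, p ∣ k+1
  · have hd : 2 * q ∣ k := cop2q.mul_dvd_of_dvd_of_dvd h2k hqk
    obtain ⟨u, v, hu, hv⟩ := nat_split (z := z) hd hpk
      (Nat.mul_pos (Nat.mul_pos two_pos hqpos) hppos) (by rw [hK]; try ring)
    exfalso
    apply hnsp
    have c0 := congrArg (fun t : ℕ => (t : ZMod q)) hu
    have c1 := congrArg (fun t : ℕ => (t : ZMod q)) hv
    push_cast at c0 c1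
    rw [ZMod.natCast_self] at c0
    exact sqh1 (v := (v : ZMod q)) (by linear_combination c0 - c1)
  -- case 4: 2 ∣ k, p,q ∣ k+1 : VALID
  · have he : p * q ∣ k + 1 := coppq.mul_dvd_of_dvd_of_dvd hpk hqk
    obtain ⟨u, v, hu, hv⟩ := nat_split (z := z) h2k he
      (Nat.mul_pos two_pos (Nat.mul_pos hppos hqpos)) (by rw [hK]; try ring)
    exact goal_of u hu
  -- case 5: p,q ∣ k, 2 ∣ k+1
  · have hd : p * q ∣ k := coppq.mul_dvd_of_dvd_of_dvd hpk hqk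
    obtain ⟨u, v, hu, hv⟩ := nat_split (z := z) hd h2k
      (Nat.mul_pos (Nat.mul_pos hppos hqpos) two_pos) (by rw [hK]; try ring)
    exfalso
    apply hs4
    have c0 := congrArg (fun t : ℕ => (t : ZMod q)) hu
    have c1 := congrArg (fun t : ℕ => (t : ZMod q)) hv
    push_cast at c0 c1
    rw [ZMod.natCast_self] at c0
    exact sqh1 (v := (v : ZMod q)) (by linear_combination c0 - c1)
  -- case 6: p ∣ k, 2,q ∣ k+1
  · have he : 2 * q ∣ k + 1 := cop2q.mul_dvd_of_dvd_of_dvd h2k hqk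
    obtain ⟨u, v, hu, hv⟩ := nat_split (z := z) hpk he
      (Nat.mul_pos hppos (Nat.mul_pos two_pos hqpos)) (by rw [hK]; try ring)
    exfalso
    apply hnsq
    have c0 := congrArg (fun t : ℕ => (t : ZMod p)) hu
    have c1 := congrArg (fun t : ℕ => (t : ZMod p)) hv
    push_cast at c0 c1
    rw [ZMod.natCast_self] at c0
    exact sqh2 (d := (2 : ZMod p)) (v := (v : ZMod p)) (by linear_combination c0 - c1) hs2
  -- case 7: q ∣ k, 2,p ∣ k+1
  · have he : 2 * p ∣ k + 1 := cop2p.mul_dvd_of_dvd_of_dvd h2k hpk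
    obtain ⟨u, v, hu, hv⟩ := nat_split (z := z) hqk he
      (Nat.mul_pos hqpos (Nat.mul_pos two_pos hppos)) (by rw [hK]; try ring)
    exfalso
    apply hnsq
    have c0 := congrArg (fun t : ℕ => (t : ZMod p)) hu
    have c1 := congrArg (fun t : ℕ => (t : ZMod p)) hv
    push_cast at c0 c1
    rw [ZMod.natCast_self] at c1
    exact sqh2 (d := (-1 : ZMod p)) (v := (u : ZMod p)) (by linear_combination c0 - c1) hs1
  -- case 8: 2,p,q ∣ k+1
  · have he : 2 * (p * q) ∣ k + 1 :=
      Nat.Coprime.mul_dvd_of_dvd_of_dvd (Nat.Coprime.mul_right cop2p cop2q) h2k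
        (coppq.mul_dvd_of_dvd_of_dvd hpk hqk)
    obtain ⟨u, v, hu, hv⟩ := nat_split (z := z) (d := 1) (one_dvd _) he
      (by simpa using Nat.mul_pos (Nat.mul_pos two_pos hppos) hqpos)
      (by rw [hK]; try ring)
    exfalso
    apply hs3
    have c0 := congrArg (fun t : ℕ => (t : ZMod q)) hu
    have c1 := congrArg (fun t : ℕ => (t : ZMod q)) hv
    push_cast at c0 c1
    rw [ZMod.natCast_self] at c1
    exact ⟨(u : ZMod q), by linear_combination c0 - c1⟩
end

section
/- Let p and q be primes with p ≡ 1 (mod 8), q ≡ 3 (mod 8), and Legendre symbol (p/q) = 1. Let (x, y) be the minimal positive integer solution of X² − 2pq·Y² = 1. Then at least one of x − 1, p(x − 1), 2p(x + 1) is a perfect square. -/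
private lemma split_lemma (k z d e : ℤ) (hk : 0 < k) (hd0 : 0 < d) (he0 : 0 < e)
    (hdk : d ∣ k) (hek : e ∣ k + 1) (heq : k * (k + 1) = d * e * z ^ 2) :
    ∃ a b : ℤ, 0 ≤ a ∧ 0 ≤ b ∧ k = d * a ^ 2 ∧ k + 1 = e * b ^ 2 ∧ (a * b) ^ 2 = z ^ 2 := by
  obtain ⟨m, hm⟩ := hdk
  obtain ⟨n, hn⟩ := hek
  have hmn : m * n = z ^ 2 := by
    have h1 : d * e * (m * n) = d * e * z ^ 2 := by
      rw [← heq, hn, hm]; ring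
    exact mul_left_cancel₀ (by positivity) h1
  have ckk : IsCoprime k (k + 1) := ⟨-1, 1, by ring⟩
  have cmn : IsCoprime m n :=
    IsCoprime.of_isCoprime_of_dvd_right
      (IsCoprime.of_isCoprime_of_dvd_left ckk ⟨d, by rw [hm]; ring⟩) ⟨e, by rw [hn]; ring⟩
  have hm0 : 0 < m := by
    rcases mul_pos_iff.mp (show 0 < d * m from hm ▸ hk) with ⟨_, h⟩ | ⟨h, _⟩
    · exact h
    · linarith
  have hn0 : 0 < n := by
    rcases mul_pos_iff.mp
        (show 0 < e * n from hn ▸ (by linarith : (0:ℤ) < k + 1)) with ⟨_, h⟩ | ⟨h, _⟩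
    · exact h
    · linarith
  obtain ⟨a, ha⟩ := Int.sq_of_isCoprime cmn hmn
  obtain ⟨b, hb⟩ := Int.sq_of_isCoprime cmn.symm (by rw [mul_comm]; exact hmn)
  have ha' : m = a ^ 2 := by
    rcases ha with h | h
    · exact h
    · nlinarith [sq_nonneg a]
  have hb' : n = b ^ 2 := by
    rcases hb with h | h
    · exact h
    · nlinarith [sq_nonneg b]
  refine ⟨|a|, |b|, abs_nonneg a, abs_nonneg b, ?_, ?_, ?_⟩
  · rw [hm, ha', sq_abs]
  · rw [hn, hb', sq_abs]
  · rw [mul_pow, sq_abs, sq_abs, ← ha', ← hb', hmn]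

private lemma no_neg_one_sq {q : ℕ} [Fact q.Prime] (hq8 : q % 8 = 3) {t : ZMod q}
    (h : IsSquare t) (h2 : t = -1) : False := by
  rw [h2] at h
  have := ZMod.exists_sq_eq_neg_one_iff.mp h
  omega

private lemma no_two_sq {q : ℕ} [Fact q.Prime] (hq8 : q % 8 = 3) {s : ZMod q}
    (h : 2 * s ^ 2 = 1) : False := by
  have hs : s ≠ 0 := by rintro rfl; simp at h
  have h2 : (2 : ZMod q) = s⁻¹ * s⁻¹ := by
    field_simp
    linear_combination h
  have := (ZMod.exists_sq_eq_two_iff (by omega : q ≠ 2)).mp ⟨s⁻¹, h2⟩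
  omega

theorem stmt_14 (p q : ℕ) (hp : p.Prime) [Fact q.Prime]
    (hp8 : p % 8 = 1) (hq8 : q % 8 = 3)
    (hleg : legendreSym q (p : ℤ) = 1)
    (x y : ℤ) (hx : 0 < x) (hy : 0 < y)
    (hpell : x ^ 2 - 2 * (p : ℤ) * (q : ℤ) * y ^ 2 = 1)
    (hmin : ∀ x' y' : ℤ, 0 < x' → 0 < y' →
      x' ^ 2 - 2 * (p : ℤ) * (q : ℤ) * y' ^ 2 = 1 → y ≤ y') :
    IsSquare (x - 1) ∨ IsSquare ((p : ℤ) * (x - 1)) ∨ IsSquare (2 * (p : ℤ) * (x + 1)) := by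
  have hq : q.Prime := Fact.out
  have hpq : p ≠ q := fun h => by omega
  have hp2 : p ≠ 2 := fun h => by omega
  have hq2 : q ≠ 2 := fun h => by omega
  have hP : Prime (p : ℤ) := Nat.prime_iff_prime_int.1 hp
  have hQ : Prime (q : ℤ) := Nat.prime_iff_prime_int.1 hq
  have h2I : Prime (2 : ℤ) := Int.prime_two
  have cpq : IsCoprime (p : ℤ) (q : ℤ) :=
    Nat.isCoprime_iff_coprime.2 ((Nat.coprime_primes hp hq).2 hpq)
  have c2p : IsCoprime (2 : ℤ) (p : ℤ) := by
    have h : IsCoprime ((2 : ℕ) : ℤ) ((p : ℕ) : ℤ) :=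
      Nat.isCoprime_iff_coprime.2 ((Nat.coprime_primes Nat.prime_two hp).2 (Ne.symm hp2))
    exact_mod_cast h
  have c2q : IsCoprime (2 : ℤ) (q : ℤ) := by
    have h : IsCoprime ((2 : ℕ) : ℤ) ((q : ℕ) : ℤ) :=
      Nat.isCoprime_iff_coprime.2 ((Nat.coprime_primes Nat.prime_two hq).2 (Ne.symm hq2))
    exact_mod_cast h
  have hp0 : (0 : ℤ) < p := by exact_mod_cast hp.pos
  have hq0 : (0 : ℤ) < q := by exact_mod_cast hq.pos
  -- x > 1
  have hx2 : 1 < x ^ 2 := by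
    have h : (0:ℤ) < 2 * (p : ℤ) * q * y ^ 2 := by positivity
    linarith
  have hx1 : 1 < x := by nlinarith
  -- x odd: get k with x = 2k+1
  obtain ⟨k, hxk⟩ : ∃ k : ℤ, x = 2 * k + 1 := by
    rcases Int.even_or_odd x with ⟨m, hm⟩ | ⟨m, hm⟩
    · exfalso
      have h1 : (1 : ℤ) = 2 * (2 * m ^ 2 - (p : ℤ) * q * y ^ 2) := by
        rw [hm] at hpell; linarith
      omega
    · exact ⟨m, hm⟩
  have hk0 : 0 < k := by omega
  -- y even
  have key0 : (p : ℤ) * q * y ^ 2 = 2 * (k * (k + 1)) := by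
    rw [hxk] at hpell; linarith
  obtain ⟨z, hyz⟩ : ∃ z : ℤ, y = 2 * z := by
    have h2d : (2 : ℤ) ∣ (p : ℤ) * q * y ^ 2 := ⟨k * (k + 1), key0⟩
    rcases h2I.dvd_mul.mp h2d with h | h
    · rcases h2I.dvd_mul.mp h with h | h
      · exfalso
        have h' : (2 : ℕ) ∣ p := by exact_mod_cast h
        omega
      · exfalso
        have h' : (2 : ℕ) ∣ q := by exact_mod_cast h
        omega
    · exact h2I.dvd_of_dvd_pow h
  have hz0 : 0 < z := by omega
  have keyeq : k * (k + 1) = 2 * (p : ℤ) * q * z ^ 2 := by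
    rw [hyz] at key0; linarith
  -- divisibilities
  have hPd : (p : ℤ) ∣ k ∨ (p : ℤ) ∣ (k + 1) :=
    hP.dvd_mul.mp ⟨2 * q * z ^ 2, by rw [keyeq]; ring⟩
  have hQd : (q : ℤ) ∣ k ∨ (q : ℤ) ∣ (k + 1) :=
    hQ.dvd_mul.mp ⟨2 * p * z ^ 2, by rw [keyeq]; ring⟩
  have h2d : (2 : ℤ) ∣ k ∨ (2 : ℤ) ∣ (k + 1) :=
    h2I.dvd_mul.mp ⟨(p : ℤ) * q * z ^ 2, by rw [keyeq]; ring⟩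
  -- p is a square mod q
  have hpne : ((p : ℤ) : ZMod q) ≠ 0 := by
    rw [Int.cast_natCast, Ne, ZMod.natCast_eq_zero_iff]
    intro hdvd
    exact hpq ((Nat.prime_dvd_prime_iff_eq hq hp).mp hdvd).symm
  have hsqp : IsSquare ((p : ℤ) : ZMod q) := (legendreSym.eq_one_iff q hpne).mp hleg
  rw [Int.cast_natCast] at hsqp
  obtain ⟨c, hc⟩ := hsqp
  rcases h2d with h2 | h2 <;> rcases hPd with hpk | hpk <;> rcases hQd with hqk | hqk
  · -- d = 2pq : minimality contradiction
    exfalso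
    have hd : 2 * (p : ℤ) * q ∣ k :=
      (c2q.mul_left cpq).mul_dvd (c2p.mul_dvd h2 hpk) hqk
    obtain ⟨a, b, ha0, hb0, hka, hkb, hab⟩ :=
      split_lemma k z (2 * (p : ℤ) * q) 1 hk0 (by positivity) one_pos hd (one_dvd _)
        (by linear_combination keyeq)
    rw [one_mul] at hkb
    have ha1 : 0 < a := by
      rcases ha0.lt_or_eq with h | h
      · exact h
      · exfalso; rw [← h] at hka; simp at hka; omega
    have hb1 : 0 < b := by
      rcases hb0.lt_or_eq with h | h
      · exact h
      · exfalso; rw [← h] at hkb; simp at hkb; omega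
    have hz : z = a * b := by
      rcases sq_eq_sq_iff_eq_or_eq_neg.mp hab with h | h
      · omega
      · exfalso; nlinarith
    have hpell' : b ^ 2 - 2 * (p : ℤ) * q * a ^ 2 = 1 := by
      linear_combination hka - hkb
    have hle := hmin b a hb1 ha1 hpell'
    rw [hyz, hz] at hle
    nlinarith
  · -- d = 2p : p(x-1) is a square
    obtain ⟨a, b, _, _, hka, _, _⟩ :=
      split_lemma k z (2 * (p : ℤ)) ((q : ℤ)) hk0 (by positivity) hq0
        (c2p.mul_dvd h2 hpk) hqk (by linear_combination keyeq)
    refine Or.inr (Or.inl ⟨2 * (p : ℤ) * a, ?_⟩)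
    linear_combination 2 * (p:ℤ) * hka + (p:ℤ) * hxk
  · -- d = 2q, e = p : 2p(x+1) is a square
    obtain ⟨a, b, _, _, _, hkb, _⟩ :=
      split_lemma k z (2 * (q : ℤ)) ((p : ℤ)) hk0 (by positivity) hp0
        (c2q.mul_dvd h2 hqk) hpk (by linear_combination keyeq)
    refine Or.inr (Or.inr ⟨2 * (p : ℤ) * b, ?_⟩)
    linear_combination 4 * (p:ℤ) * hkb + 2 * (p:ℤ) * hxk
  · -- d = 2 : x-1 is a square
    obtain ⟨a, b, _, _, hka, _, _⟩ :=
      split_lemma k z 2 ((p : ℤ) * q) hk0 two_pos (by positivity) h2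
        (cpq.mul_dvd hpk hqk) (by linear_combination keyeq)
    refine Or.inl ⟨2 * a, ?_⟩
    linear_combination 2 * hka + hxk
  · -- d = pq, e = 2 : pq a² + 1 = 2 b², mod q gives 2 square
    exfalso
    obtain ⟨a, b, _, _, hka, hkb, _⟩ :=
      split_lemma k z ((p : ℤ) * q) 2 hk0 (by positivity) two_pos
        (cpq.mul_dvd hpk hqk) h2 (by linear_combination keyeq)
    have h1 : (p : ℤ) * q * a ^ 2 + 1 = 2 * b ^ 2 := by linarith
    have hcast := congrArg (fun t : ℤ => (t : ZMod q)) h1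
    push_cast at hcast
    rw [ZMod.natCast_self] at hcast
    exact no_two_sq hq8 (show 2 * ((b : ZMod q)) ^ 2 = 1 by linear_combination -hcast)
  · -- d = p, e = 2q : p a² + 1 = 2 q b², mod q gives -1 square
    exfalso
    obtain ⟨a, b, _, _, hka, hkb, _⟩ :=
      split_lemma k z ((p : ℤ)) (2 * (q : ℤ)) hk0 hp0 (by positivity)
        hpk (c2q.mul_dvd h2 hqk) (by linear_combination keyeq)
    have h1 : (p : ℤ) * a ^ 2 + 1 = 2 * q * b ^ 2 := by linarith
    have hcast := congrArg (fun t : ℤ => (t : ZMod q)) h1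
    push_cast at hcast
    rw [ZMod.natCast_self] at hcast
    refine no_neg_one_sq hq8 ⟨c * (a : ZMod q), ?_⟩ rfl
    linear_combination -hcast + ((a : ℤ) : ZMod q) ^ 2 * hc
  · -- d = q, e = 2p : q a² + 1 = 2 p b², mod q gives 2 square
    exfalso
    obtain ⟨a, b, _, _, hka, hkb, _⟩ :=
      split_lemma k z ((q : ℤ)) (2 * (p : ℤ)) hk0 hq0 (by positivity)
        hqk (c2p.mul_dvd h2 hpk) (by linear_combination keyeq)
    have h1 : (q : ℤ) * a ^ 2 + 1 = 2 * p * b ^ 2 := by linarith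
    have hcast := congrArg (fun t : ℤ => (t : ZMod q)) h1
    push_cast at hcast
    rw [ZMod.natCast_self] at hcast
    refine no_two_sq hq8 (s := c * ((b : ℤ) : ZMod q)) ?_
    linear_combination -hcast - 2 * ((b : ℤ) : ZMod q) ^ 2 * hc
  · -- d = 1, e = 2pq : a² + 1 = 2pq b², mod q gives -1 square
    exfalso
    obtain ⟨a, b, _, _, hka, hkb, _⟩ :=
      split_lemma k z 1 (2 * (p : ℤ) * q) hk0 one_pos (by positivity) (one_dvd _)
        ((c2q.mul_left cpq).mul_dvd (c2p.mul_dvd h2 hpk) hqk)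
        (by linear_combination keyeq)
    rw [one_mul] at hka
    have h1 : (a : ℤ) ^ 2 + 1 = 2 * p * q * b ^ 2 := by linarith
    have hcast := congrArg (fun t : ℤ => (t : ZMod q)) h1
    push_cast at hcast
    rw [ZMod.natCast_self] at hcast
    refine no_neg_one_sq hq8 ⟨((a : ℤ) : ZMod q), ?_⟩ rfl
    linear_combination -hcast
end

section
/- Let q be a prime with q ≡ 3 (mod 8) and let (c, d) be the minimal positive solution of X² − 2q·Y² = 1. Then c − 1 is a perfect square. -/
private lemma sq_pos_of_coprime {x y e : ℤ} (h : IsCoprime x y) (heq : x * y = e ^ 2)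
    (hx : 0 < x) : ∃ m : ℤ, x = m ^ 2 := by
  obtain ⟨m, hm | hm⟩ := Int.sq_of_isCoprime h heq
  · exact ⟨m, hm⟩
  · nlinarith [sq_nonneg m]

theorem stmt_18 (q : ℕ) (hq : q.Prime) (hmod : q % 8 = 3)
    (c d : ℤ) (hc : 0 < c) (hd : 0 < d)
    (hpell : c ^ 2 - 2 * (q : ℤ) * d ^ 2 = 1)
    (hmin : ∀ c' d' : ℤ, 0 < c' → 0 < d' →
      c' ^ 2 - 2 * (q : ℤ) * d' ^ 2 = 1 → d ≤ d') :
    IsSquare (c - 1) := by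
  haveI : Fact q.Prime := ⟨hq⟩
  have hqZ : Prime (q : ℤ) := Nat.prime_iff_prime_int.mp hq
  have hq3 : (3 : ℤ) ≤ (q : ℤ) := by have := hq.two_le; omega
  have h2qpos : (0:ℤ) < 2 * (q:ℤ) := by linarith
  have h2qne : (2 * (q:ℤ)) ≠ 0 := ne_of_gt h2qpos
  -- c is odd
  obtain ⟨k, hk⟩ : Odd c := by
    rcases Int.even_or_odd c with ⟨t, ht⟩ | ho
    · exfalso
      have h2 : (2:ℤ) ∣ 1 := ⟨2*t^2 - q*d^2, by rw [ht] at hpell; linear_combination -hpell⟩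
      norm_num at h2
    · exact ho
  -- q * d^2 = 2k^2 + 2k
  have hkd : (q:ℤ) * d^2 = 2*k^2 + 2*k := by
    have h2 : (2:ℤ) * ((q:ℤ) * d^2) = 2 * (2*k^2 + 2*k) := by
      rw [hk] at hpell; linear_combination -hpell
    exact mul_left_cancel₀ two_ne_zero h2
  -- d is even
  obtain ⟨e, he⟩ : Even d := by
    have hev : Even ((q:ℤ) * d^2) := ⟨k^2 + k, by linarith⟩
    rcases Int.even_mul.mp hev with hq' | hd'
    · exfalso
      obtain ⟨t, ht⟩ := hq'
      omega
    · exact (Int.even_pow.mp hd').1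
  have he' : d = 2 * e := by omega
  have he0 : 0 < e := by omega
  -- key factorization
  have hkey : k * (k + 1) = 2 * (q:ℤ) * e^2 := by
    have h2 : (2:ℤ) * (k * (k+1)) = 2 * (2 * (q:ℤ) * e^2) := by
      rw [he'] at hkd; linear_combination -hkd
    exact mul_left_cancel₀ two_ne_zero h2
  have hk0 : 0 < k := by
    have hknn : 0 ≤ k := by omega
    rcases hknn.lt_or_eq with h | h
    · exact h
    · exfalso
      rw [← h] at hkey
      have hpos : 0 < 2 * (q:ℤ) * e^2 := mul_pos h2qpos (pow_pos he0 2)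
      simp at hkey
      rcases hkey with h' | h' <;> omega
  have hcop : IsCoprime k (k + 1) := ⟨-1, 1, by ring⟩
  have hqdvd : (q:ℤ) ∣ k * (k+1) := ⟨2*e^2, by rw [hkey]; ring⟩
  have h2dvd : (2:ℤ) ∣ k * (k+1) := ⟨q*e^2, by rw [hkey]; ring⟩
  have hqodd : ¬ (2:ℤ) ∣ (q:ℤ) := by rintro ⟨t, ht⟩; omega
  rcases hqZ.dvd_mul.mp hqdvd with hq1 | hq1 <;>
    rcases (Int.prime_two.dvd_mul.mp h2dvd) with h21 | h21
  · -- q ∣ k, 2 ∣ k : gives a smaller solution, contradicts minimality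
    exfalso
    have h2q : (2 * (q:ℤ)) ∣ k := (Int.prime_two.coprime_iff_not_dvd.mpr hqodd).mul_dvd h21 hq1
    obtain ⟨γ, hγ⟩ := h2q
    have hγ0 : 0 < γ := by nlinarith
    have hγδ : γ * (k+1) = e^2 := by
      have h2 : (2 * (q:ℤ)) * (γ * (k+1)) = (2 * (q:ℤ)) * e^2 := by
        calc (2 * (q:ℤ)) * (γ * (k+1)) = (2*(q:ℤ)*γ) * (k+1) := by ring
        _ = k * (k+1) := by rw [← hγ]
        _ = 2 * (q:ℤ) * e^2 := hkey
      exact mul_left_cancel₀ h2qne h2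
    have hcγδ : IsCoprime γ (k+1) :=
      hcop.of_isCoprime_of_dvd_left ⟨2*(q:ℤ), by rw [hγ]; ring⟩
    obtain ⟨g, hg⟩ := sq_pos_of_coprime hcγδ hγδ hγ0
    obtain ⟨n, hn⟩ := sq_pos_of_coprime (e := e) hcγδ.symm (by linear_combination hγδ) (by linarith)
    have hg0 : g ≠ 0 := by rintro rfl; simp at hg; omega
    have hn0 : n ≠ 0 := by rintro rfl; simp at hn; omega
    have hkg : k = 2*(q:ℤ)*g^2 := by rw [hγ, hg]
    have hpell' : |n|^2 - 2*(q:ℤ)*|g|^2 = 1 := by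
      rw [sq_abs, sq_abs]
      linarith [hn, hkg]
    have hle := hmin |n| |g| (abs_pos.mpr hn0) (abs_pos.mpr hg0) hpell'
    have h1 : e^2 = (|g| * |n|)^2 := by
      rw [mul_pow, sq_abs, sq_abs, ← hγδ, hg, hn]
    have hee : e = |g| * |n| := by
      have h3 := (sq_eq_sq_iff_abs_eq_abs e (|g| * |n|)).mp h1
      rwa [abs_of_pos he0, abs_of_nonneg (by positivity)] at h3
    nlinarith [Int.one_le_abs hg0, Int.one_le_abs hn0]
  · -- q ∣ k, 2 ∣ k+1 : 2n^2 = q g^2 + 1, contradiction (2 would be a QR mod q)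
    exfalso
    obtain ⟨γ, hγ⟩ := hq1
    obtain ⟨δ, hδ⟩ := h21
    have hγ0 : 0 < γ := by nlinarith
    have hδ0 : 0 < δ := by nlinarith
    have hγδ : γ * δ = e^2 := by
      have h2 : (2 * (q:ℤ)) * (γ * δ) = (2 * (q:ℤ)) * e^2 := by
        calc (2 * (q:ℤ)) * (γ * δ) = ((q:ℤ)*γ) * (2*δ) := by ring
        _ = k * (k+1) := by rw [← hγ, ← hδ]
        _ = 2 * (q:ℤ) * e^2 := hkey
      exact mul_left_cancel₀ h2qne h2
    have hcγδ : IsCoprime γ δ :=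
      (hcop.of_isCoprime_of_dvd_left ⟨(q:ℤ), by rw [hγ]; ring⟩).of_isCoprime_of_dvd_right
        ⟨2, by rw [hδ]; ring⟩
    obtain ⟨g, hg⟩ := sq_pos_of_coprime hcγδ hγδ hγ0
    obtain ⟨n, hn⟩ := sq_pos_of_coprime (e := e) hcγδ.symm (by linear_combination hγδ) hδ0
    have heqn : 2 * n^2 = (q:ℤ) * g^2 + 1 := by
      have h1 : k + 1 = 2 * n^2 := by rw [hδ, hn]
      have h2 : k = (q:ℤ) * g^2 := by rw [hγ, hg]
      linarith
    have h2sq : IsSquare (2 : ZMod q) := by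
      refine ⟨2 * (n : ZMod q), ?_⟩
      have hc2 := congrArg (fun z : ℤ => (z : ZMod q)) heqn
      push_cast at hc2
      rw [ZMod.natCast_self] at hc2
      linear_combination -2 * hc2
    rcases (ZMod.exists_sq_eq_two_iff (p := q) (by omega)).mp h2sq with h | h <;> omega
  · -- q ∣ k+1, 2 ∣ k : the good case, c - 1 = (2m)^2
    obtain ⟨γ, hγ⟩ := h21
    obtain ⟨δ, hδ⟩ := hq1
    have hγ0 : 0 < γ := by nlinarith
    have hδ0 : 0 < δ := by nlinarith
    have hγδ : γ * δ = e^2 := by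
      have h2 : (2 * (q:ℤ)) * (γ * δ) = (2 * (q:ℤ)) * e^2 := by
        calc (2 * (q:ℤ)) * (γ * δ) = (2*γ) * ((q:ℤ)*δ) := by ring
        _ = k * (k+1) := by rw [← hγ, ← hδ]
        _ = 2 * (q:ℤ) * e^2 := hkey
      exact mul_left_cancel₀ h2qne h2
    have hcγδ : IsCoprime γ δ :=
      (hcop.of_isCoprime_of_dvd_left ⟨2, by rw [hγ]; ring⟩).of_isCoprime_of_dvd_right
        ⟨(q:ℤ), by rw [hδ]; ring⟩
    obtain ⟨m, hm⟩ := sq_pos_of_coprime hcγδ hγδ hγ0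
    refine ⟨2 * m, ?_⟩
    have hkm : k = 2 * m^2 := by rw [hγ, hm]
    rw [hk, hkm]; ring
  · -- q ∣ k+1, 2 ∣ k+1 : m^2 + 1 = 2 q n^2, contradiction (-1 would be a QR mod q)
    exfalso
    have h2q : (2 * (q:ℤ)) ∣ (k+1) := (Int.prime_two.coprime_iff_not_dvd.mpr hqodd).mul_dvd h21 hq1
    obtain ⟨δ, hδ⟩ := h2q
    have hδ0 : 0 < δ := by nlinarith
    have hγδ : k * δ = e^2 := by
      have h2 : (2 * (q:ℤ)) * (k * δ) = (2 * (q:ℤ)) * e^2 := by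
        calc (2 * (q:ℤ)) * (k * δ) = k * (2*(q:ℤ)*δ) := by ring
        _ = k * (k+1) := by rw [← hδ]
        _ = 2 * (q:ℤ) * e^2 := hkey
      exact mul_left_cancel₀ h2qne h2
    have hcγδ : IsCoprime k δ :=
      hcop.of_isCoprime_of_dvd_right ⟨2*(q:ℤ), by rw [hδ]; ring⟩
    obtain ⟨m, hm⟩ := sq_pos_of_coprime hcγδ hγδ hk0
    obtain ⟨n, hn⟩ := sq_pos_of_coprime (e := e) hcγδ.symm (by linear_combination hγδ) hδ0
    have heqn : m^2 + 1 = 2 * (q:ℤ) * n^2 := by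
      have h1 : k + 1 = 2 * (q:ℤ) * n^2 := by rw [hδ, hn]
      linarith [hm ▸ h1]
    have hneg : IsSquare (-1 : ZMod q) := by
      refine ⟨(m : ZMod q), ?_⟩
      have hc2 := congrArg (fun z : ℤ => (z : ZMod q)) heqn
      push_cast at hc2
      rw [ZMod.natCast_self] at hc2
      linear_combination -hc2
    exact absurd ((ZMod.exists_sq_eq_neg_one_iff (p := q)).mp hneg) (by omega)
end

section
/- Let q be a prime with q ≡ 3 (mod 8) and let (α, β) be the minimal positive solution of X² − q·Y² = 1. Then α − 1 is a perfect square. -/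
theorem stmt_19 (q : ℕ) (hq : q.Prime) (hmod : q % 8 = 3)
    (α β : ℤ) (hα : 0 < α) (hβ : 0 < β)
    (hpell : α ^ 2 - (q : ℤ) * β ^ 2 = 1)
    (hmin : ∀ α' β' : ℤ, 0 < α' → 0 < β' →
      α' ^ 2 - (q : ℤ) * β' ^ 2 = 1 → β ≤ β') :
    IsSquare (α - 1) := by
  haveI : Fact q.Prime := ⟨hq⟩
  have hq3 : (3 : ℕ) ≤ q := by
    have := hq.two_le; omega
  have hqZ : Prime (q : ℤ) := Nat.prime_iff_prime_int.mp hq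
  have hqZ0 : (q : ℤ) ≠ 0 := by positivity
  have hα2 : 2 ≤ α := by nlinarith [sq_nonneg β, sq_nonneg α]
  have hfac : (α - 1) * (α + 1) = (q : ℤ) * β ^ 2 := by ring_nf; nlinarith
  rcases Int.even_or_odd α with ⟨k, hk⟩ | ⟨m, hm⟩
  · -- α even
    have cop : IsCoprime (α - 1) (α + 1) := ⟨k, 1 - k, by rw [hk]; ring⟩
    have hdvd : (q : ℤ) ∣ (α - 1) * (α + 1) := ⟨β ^ 2, hfac⟩
    rcases (hqZ.dvd_mul.mp hdvd) with ⟨y, hy⟩ | ⟨y, hy⟩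
    · -- q ∣ α - 1 : leads to 2 being a square mod q, contradiction
      exfalso
      have heq : y * (α + 1) = β ^ 2 := by
        apply mul_left_cancel₀ hqZ0
        rw [← hfac, hy]; ring
      have cop2 : IsCoprime (α + 1) y :=
        (cop.symm).of_isCoprime_of_dvd_right ⟨q, by rw [hy]; ring⟩
      obtain ⟨a, ha⟩ := Int.sq_of_isCoprime cop2 (by rw [← heq]; ring)
      have ha' : α + 1 = a ^ 2 := by
        rcases ha with h | h
        · exact h
        · exfalso; nlinarith [sq_nonneg a]
      have h2 : IsSquare (2 : ZMod q) := by
        refine ⟨(a : ZMod q), ?_⟩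
        have : ((a : ℤ) : ZMod q) * ((a : ℤ) : ZMod q) = 2 := by
          have hcast : (((q : ℤ) * y + 2 : ℤ) : ZMod q) = 2 := by push_cast; simp
          rw [← hcast]
          have : (a : ℤ) * a = (q : ℤ) * y + 2 := by nlinarith
          rw [← this]; push_cast; ring
        exact this.symm
      have := (ZMod.exists_sq_eq_two_iff (p := q) (by omega)).mp h2
      omega
    · -- q ∣ α + 1 : α - 1 is a square
      have heq : (α - 1) * y = β ^ 2 := by
        apply mul_left_cancel₀ hqZ0
        rw [← hfac, hy]; ring
      have cop2 : IsCoprime (α - 1) y :=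
        cop.of_isCoprime_of_dvd_right ⟨q, by rw [hy]; ring⟩
      obtain ⟨a, ha⟩ := Int.sq_of_isCoprime cop2 heq
      rcases ha with h | h
      · exact ⟨a, by rw [h]; ring⟩
      · exfalso; nlinarith [sq_nonneg a]
  · -- α odd
    exfalso
    have hm1 : 1 ≤ m := by omega
    have hfac2 : 4 * (m * (m + 1)) = (q : ℤ) * β ^ 2 := by rw [← hfac, hm]; ring
    obtain ⟨t, ht⟩ := Int.even_mul_succ_self m
    have h2β : (2 : ℤ) ∣ β := by
      have h2dvd : (2 : ℤ) ∣ (q : ℤ) * β ^ 2 := ⟨4 * t, by rw [← hfac2, ht]; ring⟩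
      rcases Int.prime_two.dvd_mul.mp h2dvd with h | h
      · exfalso
        have : (2 : ℕ) ∣ q := Int.ofNat_dvd.mp (by exact_mod_cast h)
        have := hq.two_le; omega
      · exact Int.prime_two.dvd_of_dvd_pow h
    obtain ⟨c, hc⟩ := h2β
    have hc0 : 0 < c := by omega
    have hmc : m * (m + 1) = (q : ℤ) * c ^ 2 := by
      have h4 : 4 * (m * (m + 1)) = 4 * ((q : ℤ) * c ^ 2) := by
        rw [hfac2, hc]; ring
      linarith
    have cop : IsCoprime m (m + 1) := ⟨-1, 1, by ring⟩
    have hdvd : (q : ℤ) ∣ m * (m + 1) := ⟨c ^ 2, hmc⟩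
    rcases (hqZ.dvd_mul.mp hdvd) with ⟨y, hy⟩ | ⟨y, hy⟩
    · -- q ∣ m : smaller solution, contradicts minimality
      have hy0 : 0 < y := by
        rcases lt_or_ge 0 y with h | h
        · exact h
        · exfalso; nlinarith [Int.natCast_pos.mpr (show 0 < q by omega)]
      have heq : y * (m + 1) = c ^ 2 := by
        apply mul_left_cancel₀ hqZ0
        rw [← hmc, hy]; ring
      have cop2 : IsCoprime (m + 1) y :=
        (cop.symm).of_isCoprime_of_dvd_right ⟨q, by rw [hy]; ring⟩
      obtain ⟨d, hd⟩ := Int.sq_of_isCoprime cop2 (by rw [← heq]; ring)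
      have hd' : m + 1 = d ^ 2 := by
        rcases hd with h | h
        · exact h
        · exfalso; nlinarith [sq_nonneg d]
      have cop3 : IsCoprime y (m + 1) := cop2.symm
      obtain ⟨a, hA⟩ := Int.sq_of_isCoprime cop3 heq
      have ha' : y = a ^ 2 := by
        rcases hA with h | h
        · exact h
        · exfalso; nlinarith [sq_nonneg a]
      set a' := |a| with ha'def
      set d' := |d| with hd'def
      have haa : a' ^ 2 = a ^ 2 := sq_abs a
      have hdd : d' ^ 2 = d ^ 2 := sq_abs d
      have ha'0 : 0 < a' := by
        rcases eq_or_ne a 0 with h | h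
        · exfalso; rw [h] at ha'; simp at ha'; omega
        · exact abs_pos.mpr h
      have hd'0 : 0 < d' := by
        rcases eq_or_ne d 0 with h | h
        · exfalso; rw [h] at hd'; simp at hd'; omega
        · exact abs_pos.mpr h
      have hpell' : d' ^ 2 - (q : ℤ) * a' ^ 2 = 1 := by
        rw [haa, hdd, ← ha', ← hd']; linarith [hy]
      have hle := hmin d' a' hd'0 ha'0 hpell'
      -- but c ^ 2 = (a' * d') ^ 2 and c, a'*d' > 0 so c = a' * d'
      have hcsq : c ^ 2 = (a' * d') ^ 2 := by
        rw [mul_pow, haa, hdd, ← ha', ← hd', ← heq]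
      have hceq : c = a' * d' := by
        have h1 : (c - a' * d') * (c + a' * d') = 0 := by linear_combination hcsq
        rcases mul_eq_zero.mp h1 with h | h
        · linarith
        · exfalso; linarith [mul_pos ha'0 hd'0]
      have hstep : a' ≤ a' * d' := le_mul_of_one_le_right ha'0.le (by omega : (1:ℤ) ≤ d')
      linarith
    · -- q ∣ m + 1 : -1 is a square mod q, contradiction
      have heq : m * y = c ^ 2 := by
        apply mul_left_cancel₀ hqZ0
        rw [← hmc, hy]; ring
      have cop2 : IsCoprime m y :=
        cop.of_isCoprime_of_dvd_right ⟨q, by rw [hy]; ring⟩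
      obtain ⟨a, hA⟩ := Int.sq_of_isCoprime cop2 heq
      have ha' : m = a ^ 2 := by
        rcases hA with h | h
        · exact h
        · exfalso; nlinarith [sq_nonneg a]
      have h2 : IsSquare (-1 : ZMod q) := by
        refine ⟨(a : ZMod q), ?_⟩
        have hcast : (((q : ℤ) * y - 1 : ℤ) : ZMod q) = -1 := by push_cast; simp
        have : (a : ℤ) * a = (q : ℤ) * y - 1 := by nlinarith
        calc (-1 : ZMod q) = (((q : ℤ) * y - 1 : ℤ) : ZMod q) := hcast.symm
          _ = (((a : ℤ) * a : ℤ) : ZMod q) := by rw [this]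
          _ = (a : ZMod q) * (a : ZMod q) := by push_cast; ring
      have := ZMod.exists_sq_eq_neg_one_iff.mp h2
      omega
end
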